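/- arXiv:1612.08328 — 3 statements merged into one kernel-verified Lean document; each statement's English description precedes it below -/
import Mathlib

section
/- Under the GSVD structure, the orthogonal complement of the kernel of H_ba is the span of columns k−r−s+1, …, k of U_a: (ker H_ba)^⊥ = span{u_{k−r−s+1}, …, u_k}, where u_i denotes the i-th column of U_a. -/
/-!
Since `U_ba` is unitary, `H_ba x = 0` iff `Σ_ba [Ω⁻¹ 0] U_aᴴ x = 0`. Each of the last `r + s`
columns of `Σ_ba` has a nonzero entry (`b_p` or `1`) that is alone in its row, and the other
columns vanish; as `Ω` is invertible, `H_ba x = 0` therefore says exactly that the coordinates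
`k−r−s+1, …, k` of `U_aᴴ x` vanish. These coordinates are `⟪u_j, x⟫`, so `ker H_ba` is the
orthogonal complement of `span {u_{k−r−s+1}, …, u_k}`, and in finite dimension `Kᗮᗮ = K`.
-/

open Matrix

/-- The `N_r × k` GSVD factor `Σ_ba`: row blocks of sizes `N_r−r−s, s, r` and column blocks
of sizes `k−r−s, s, r`; the only nonzero blocks are the `(2,2)` block `diag(b_1,…,b_s)` and
the `(3,3)` block `I_r`.  (Row `i` is paired with column `j` iff `i + k = j + N_r`.) -/
noncomputable def SigmaBa (Nr k r s : ℕ) (b : ℕ → ℝ) : Matrix (Fin Nr) (Fin k) ℂ :=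
  Matrix.of fun i j =>
    if (i : ℕ) + k = (j : ℕ) + Nr ∧ Nr - (r + s) ≤ (i : ℕ) then
      if (i : ℕ) < Nr - r then ((b ((i : ℕ) - (Nr - (r + s))) : ℝ) : ℂ) else 1
    else 0

/-- The `N_e × k` GSVD factor `Σ_ea`: row blocks of sizes `k−r−s, s, N_e−k+r` and column blocks
of sizes `k−r−s, s, r`; the only nonzero blocks are the `(1,1)` block `I_{k−r−s}` and the
`(2,2)` block `diag(e_1,…,e_s)`. -/
noncomputable def SigmaEa (Ne k r s : ℕ) (e : ℕ → ℝ) : Matrix (Fin Ne) (Fin k) ℂ :=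
  Matrix.of fun i j =>
    if (i : ℕ) = (j : ℕ) ∧ (i : ℕ) < k - r then
      if (i : ℕ) < k - (r + s) then 1 else ((e ((i : ℕ) - (k - (r + s))) : ℝ) : ℂ)
    else 0

/-- The `k × N_t` matrix `[Ω^{-1} 0]`, where `Ω = diag(ω_0,…,ω_{k-1})`. -/
noncomputable def OmegaInvZero (k Nt : ℕ) (ω : ℕ → ℂ) : Matrix (Fin k) (Fin Nt) ℂ :=
  Matrix.of fun i j => if (j : ℕ) = (i : ℕ) then (ω (i : ℕ))⁻¹ else 0

/-- The `N_t × N_t` matrix `A` with `Ω = diag(ω_0,…,ω_{k-1})` in its top-left `k × k` block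
and zeros elsewhere. -/
noncomputable def Amat (Nt k : ℕ) (ω : ℕ → ℂ) : Matrix (Fin Nt) (Fin Nt) ℂ :=
  Matrix.of fun i j => if (i : ℕ) = (j : ℕ) ∧ (i : ℕ) < k then ω (i : ℕ) else 0

lemma mulVec_eq_zero_iff_of_mem_unitaryGroup {n α : Type*} [Fintype n] [DecidableEq n]
    [CommRing α] [StarRing α] {U : Matrix n n α} (hU : U ∈ unitaryGroup n α) {w : n → α} :
    U *ᵥ w = 0 ↔ w = 0 := by
  refine ⟨fun h => ?_, fun h => h ▸ mulVec_zero U⟩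
  simpa [mulVec_mulVec, (mem_unitaryGroup_iff').1 hU] using congrArg (star U *ᵥ ·) h

lemma mulVec_eq_zero_iff_of_pivot {m n R : Type*} [Fintype n] [Semiring R] [NoZeroDivisors R]
    (A : Matrix m n R) (J : Set n) (hzero : ∀ i, ∀ j ∉ J, A i j = 0)
    (hpivot : ∀ j ∈ J, ∃ i, A i j ≠ 0 ∧ ∀ j' ≠ j, A i j' = 0) (z : n → R) :
    A *ᵥ z = 0 ↔ ∀ j ∈ J, z j = 0 := by
  refine ⟨fun h j hj => ?_, fun h => funext fun i => Finset.sum_eq_zero fun j _ => ?_⟩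
  · obtain ⟨i, hij, hrow⟩ := hpivot j hj
    have hi : (A *ᵥ z) i = A i j * z j :=
      Finset.sum_eq_single j (fun j' _ hj' => by simp [hrow j' hj']) (by simp)
    rw [h, Pi.zero_apply, eq_comm] at hi
    exact (mul_eq_zero.1 hi).resolve_left hij
  · by_cases hj : j ∈ J
    · simp [h j hj]
    · simp [hzero i j hj]

section

variable {𝕜 : Type*} [RCLike 𝕜]

lemma inner_toLp_col_eq_conjTranspose_mulVec {m n : Type*} [Fintype m] (V : Matrix m n 𝕜)
    (j : n) (x : EuclideanSpace 𝕜 m) :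
    inner 𝕜 (WithLp.toLp 2 (fun i => V i j)) x = (Vᴴ *ᵥ x.ofLp) j := by
  simp [EuclideanSpace.inner_eq_star_dotProduct, mulVec, dotProduct, mul_comm]

lemma mem_orthogonal_span_iff {E : Type*} [NormedAddCommGroup E] [InnerProductSpace 𝕜 E]
    {s : Set E} {x : E} : x ∈ (Submodule.span 𝕜 s)ᗮ ↔ ∀ u ∈ s, inner 𝕜 u x = 0 := by
  rw [Submodule.mem_orthogonal]
  simp_rw [← Submodule.mem_orthogonal_singleton_iff_inner_left (u := x)]
  exact Submodule.span_le

theorem orthogonal_ker_toEuclideanLin_mul_conjTranspose {l m n : Type*} [Fintype m] [Fintype n]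
    [DecidableEq m] (M : Matrix l n 𝕜) (V : Matrix m n 𝕜) (J : Set n)
    (hM : ∀ y, M *ᵥ y = 0 ↔ ∀ j ∈ J, y j = 0) :
    (LinearMap.ker (toEuclideanLin (M * Vᴴ)))ᗮ =
      Submodule.span 𝕜 ((fun j => WithLp.toLp 2 (fun i => V i j)) '' J) := by
  have hker : LinearMap.ker (toEuclideanLin (M * Vᴴ)) =
      (Submodule.span 𝕜 ((fun j => WithLp.toLp 2 (fun i => V i j)) '' J))ᗮ := by
    ext x
    simp only [LinearMap.mem_ker, mem_orthogonal_span_iff, Set.forall_mem_image,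
      inner_toLp_col_eq_conjTranspose_mulVec]
    rw [← hM, mulVec_mulVec]
    exact WithLp.toLp_eq_zero 2
  rw [hker, Submodule.orthogonal_orthogonal]

end

lemma sigmaBa_mulVec_eq_zero_iff {Nr k r s : ℕ} (hrsNr : r + s ≤ Nr) {b : ℕ → ℝ}
    (hb : ∀ p < s, b p ≠ 0) (z : Fin k → ℂ) :
    SigmaBa Nr k r s b *ᵥ z = 0 ↔ ∀ j ∈ {j : Fin k | k - (r + s) ≤ (j : ℕ)}, z j = 0 := by
  refine mulVec_eq_zero_iff_of_pivot _ {j : Fin k | k - (r + s) ≤ (j : ℕ)}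
    (fun i j (hj : ¬k - (r + s) ≤ (j : ℕ)) => ?_) (fun j (hj : k - (r + s) ≤ (j : ℕ)) => ?_) z
  · simp only [SigmaBa, of_apply]
    rw [if_neg (by omega)]
  · refine ⟨⟨j + Nr - k, by omega⟩, ?_, fun j' hj' => ?_⟩
    · simp only [SigmaBa, of_apply]
      rw [if_pos (by omega)]
      split_ifs with hlt
      · exact_mod_cast hb _ (by omega)
      · exact one_ne_zero
    · simp only [SigmaBa, of_apply]
      rw [if_neg fun h => hj' (Fin.ext (by omega))]

lemma omegaInvZero_mulVec_apply (k Nt : ℕ) (ω : ℕ → ℂ) (y : Fin Nt → ℂ) (i : Fin k) :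
    (OmegaInvZero k Nt ω *ᵥ y) i = if h : (i : ℕ) < Nt then (ω i)⁻¹ * y ⟨i, h⟩ else 0 := by
  simp only [mulVec, dotProduct]
  split_ifs with h
  · refine (Finset.sum_eq_single ⟨i, h⟩ (fun j _ hj => ?_) (by simp)).trans
      (by simp [OmegaInvZero])
    simp [OmegaInvZero, if_neg fun h' => hj (Fin.ext h')]
  · refine Finset.sum_eq_zero fun j _ => ?_
    simp [OmegaInvZero, if_neg (show (j : ℕ) ≠ i by omega)]

lemma sigmaBa_mul_omegaInvZero_mulVec_eq_zero_iff {Nt Nr k r s : ℕ} (hrsNr : r + s ≤ Nr)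
    {b : ℕ → ℝ} (hb : ∀ p < s, b p ≠ 0) {ω : ℕ → ℂ} (hω : ∀ i < k, ω i ≠ 0)
    (y : Fin Nt → ℂ) :
    (SigmaBa Nr k r s b * OmegaInvZero k Nt ω) *ᵥ y = 0 ↔
      ∀ j ∈ {j : Fin Nt | k - (r + s) ≤ (j : ℕ) ∧ (j : ℕ) < k}, y j = 0 := by
  rw [← mulVec_mulVec, sigmaBa_mulVec_eq_zero_iff hrsNr hb]
  simp only [Set.mem_ofPred_eq, omegaInvZero_mulVec_apply]
  constructor
  · intro h j ⟨hj, hjk⟩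
    have := h ⟨j, hjk⟩ hj
    rw [dif_pos j.2] at this
    exact (mul_eq_zero.1 this).resolve_left (inv_ne_zero (hω j hjk))
  · intro h i hi
    split_ifs with hiNt
    · rw [h _ ⟨hi, i.2⟩, mul_zero]
    · rfl

theorem ker_Hba_orth_eq_span_general (Nt Nr k r s : ℕ)
    (hrsNr : r + s ≤ Nr)
    (Ua : Matrix (Fin Nt) (Fin Nt) ℂ) (Uba : Matrix (Fin Nr) (Fin Nr) ℂ)
    (hUba : Uba ∈ Matrix.unitaryGroup (Fin Nr) ℂ)
    (ω : ℕ → ℂ) (hω : ∀ i < k, ω i ≠ 0)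
    (b : ℕ → ℝ)
    (hb : ∀ p < s, 0 < b p ∧ b p < 1)
    (Hba : Matrix (Fin Nr) (Fin Nt) ℂ)
    (hHba : Hba = Uba * SigmaBa Nr k r s b * OmegaInvZero k Nt ω * Uaᴴ) :
    (LinearMap.ker (Matrix.toEuclideanLin Hba))ᗮ =
      Submodule.span ℂ
        ((fun j : Fin Nt => (WithLp.toLp 2 (fun i => Ua i j) : EuclideanSpace ℂ (Fin Nt))) ''
          {j : Fin Nt | k - (r + s) ≤ (j : ℕ) ∧ (j : ℕ) < k}) := by
  subst hHba
  refine orthogonal_ker_toEuclideanLin_mul_conjTranspose _ Ua _ fun y => ?_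
  rw [Matrix.mul_assoc, ← mulVec_mulVec, mulVec_eq_zero_iff_of_mem_unitaryGroup hUba]
  exact sigmaBa_mul_omegaInvZero_mulVec_eq_zero_iff hrsNr (fun p hp => (hb p hp).1.ne') hω y

/-- Under the GSVD structure, `(ker H_ba)^⊥` is the span of columns
`k−r−s+1, …, k` (1-indexed) of `U_a`. -/
theorem ker_Hba_orth_eq_span (Nt Nr Ne k r s : ℕ)
    (hNt : 0 < Nt) (hNr : 0 < Nr) (hNe : 0 < Ne)
    (hrsk : r + s ≤ k) (hkNt : k ≤ Nt) (hrsNr : r + s ≤ Nr) (hkrNe : k - r ≤ Ne)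
    (Ua : Matrix (Fin Nt) (Fin Nt) ℂ) (Uba : Matrix (Fin Nr) (Fin Nr) ℂ)
    (Uea : Matrix (Fin Ne) (Fin Ne) ℂ)
    (hUa : Ua ∈ Matrix.unitaryGroup (Fin Nt) ℂ)
    (hUba : Uba ∈ Matrix.unitaryGroup (Fin Nr) ℂ)
    (hUea : Uea ∈ Matrix.unitaryGroup (Fin Ne) ℂ)
    (ω : ℕ → ℂ) (hω : ∀ i < k, ω i ≠ 0)
    (b e : ℕ → ℝ)
    (hb : ∀ p < s, 0 < b p ∧ b p < 1) (he : ∀ p < s, 0 < e p ∧ e p < 1)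
    (hbe : ∀ p < s, b p ^ 2 + e p ^ 2 = 1)
    (Hba : Matrix (Fin Nr) (Fin Nt) ℂ) (Hea : Matrix (Fin Ne) (Fin Nt) ℂ)
    (hHba : Hba = Uba * SigmaBa Nr k r s b * OmegaInvZero k Nt ω * Uaᴴ)
    (hHea : Hea = Uea * SigmaEa Ne k r s e * OmegaInvZero k Nt ω * Uaᴴ) :
    (LinearMap.ker (Matrix.toEuclideanLin Hba))ᗮ =
      Submodule.span ℂ
        ((fun j : Fin Nt => (WithLp.toLp 2 (fun i => Ua i j) : EuclideanSpace ℂ (Fin Nt))) ''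
          {j : Fin Nt | k - (r + s) ≤ (j : ℕ) ∧ (j : ℕ) < k}) :=
  ker_Hba_orth_eq_span_general Nt Nr k r s hrsNr Ua Uba hUba ω hω b hb Hba hHba
end

section
/- Under the GSVD structure, the subspace S_ba = (ker H_ba)^⊥ ∩ ker H_ea of ℂ^{N_t} has dimension r: dim_ℂ S_ba = r. -/
/-!
Conjugating by the unitaries reduces everything to the middle factors `M = Σ [Ω⁻¹ 0]`:
the left unitaries `U_ba`, `U_ea` do not change kernels, and `U_a` is an isometry, so it carries
kernels to kernels and commutes with orthogonal complements. Each `M` has at most one nonzero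
entry per row, so its kernel is the coordinate subspace cut out by the columns carrying a nonzero
entry: `k − r − s ≤ j < k` for `Σ_ba` and `j < k − r` for `Σ_ea`. Hence `S_ba` is the image under
`U_a` of the span of the basis vectors `e_j` with `k − r ≤ j < k`, which has dimension `r`.
-/

open Matrix

section Unitary

variable {𝕜 : Type*} [RCLike 𝕜] {m n : Type*} [Fintype n] [DecidableEq n]

noncomputable def unitaryLinearIsometryEquiv {U : Matrix n n 𝕜} (hU : U ∈ unitaryGroup n 𝕜) :
    EuclideanSpace 𝕜 n ≃ₗᵢ[𝕜] EuclideanSpace 𝕜 n :=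
  Unitary.linearIsometryEquiv ⟨toEuclideanCLM (n := n) (𝕜 := 𝕜) U, Unitary.map_mem _ hU⟩

lemma coe_unitaryLinearIsometryEquiv {U : Matrix n n 𝕜} (hU : U ∈ unitaryGroup n 𝕜) :
    ((unitaryLinearIsometryEquiv hU).toLinearEquiv : EuclideanSpace 𝕜 n →ₗ[𝕜] _) =
      toEuclideanLin U := rfl

lemma coe_unitaryLinearIsometryEquiv_symm {U : Matrix n n 𝕜} (hU : U ∈ unitaryGroup n 𝕜) :
    ((unitaryLinearIsometryEquiv hU).symm.toLinearEquiv : EuclideanSpace 𝕜 n →ₗ[𝕜] _) =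
      toEuclideanLin Uᴴ := by
  rw [← coe_toEuclideanCLM_eq_toEuclideanLin, ← star_eq_conjTranspose, map_star]
  rfl

lemma ker_toEuclideanLin_unitary_mul [Fintype m] [DecidableEq m] {U : Matrix m m 𝕜}
    (hU : U ∈ unitaryGroup m 𝕜) (A : Matrix m n 𝕜) :
    LinearMap.ker (toEuclideanLin (U * A)) = LinearMap.ker (toEuclideanLin A) := by
  rw [toLpLin_mul, LinearMap.ker_comp, ← coe_unitaryLinearIsometryEquiv hU,
    LinearEquiv.ker, Submodule.comap_bot]

lemma ker_toEuclideanLin_mul_conjTranspose {U : Matrix n n 𝕜}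
    (hU : U ∈ unitaryGroup n 𝕜) (A : Matrix m n 𝕜) :
    LinearMap.ker (toEuclideanLin (A * Uᴴ)) =
      (LinearMap.ker (toEuclideanLin A)).map
        ((unitaryLinearIsometryEquiv hU).toLinearEquiv : EuclideanSpace 𝕜 n →ₗ[𝕜] _) := by
  rw [toLpLin_mul, LinearMap.ker_comp, ← coe_unitaryLinearIsometryEquiv_symm hU,
    Submodule.comap_equiv_eq_map_symm]
  rfl

end Unitary

section Vanishing

variable (𝕜 : Type*) [RCLike 𝕜] {ι : Type*}

def vanishingSubspace (S : Set ι) : Submodule 𝕜 (EuclideanSpace 𝕜 ι) where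
  carrier := {x | ∀ i ∈ S, x i = 0}
  add_mem' hx hy i hi := by simp [hx i hi, hy i hi]
  zero_mem' _ _ := rfl
  smul_mem' c x hx i hi := by simp [hx i hi]

variable {𝕜}

@[simp]
lemma mem_vanishingSubspace {S : Set ι} {x : EuclideanSpace 𝕜 ι} :
    x ∈ vanishingSubspace 𝕜 S ↔ ∀ i ∈ S, x i = 0 := Iff.rfl

lemma vanishingSubspace_union (S T : Set ι) :
    vanishingSubspace 𝕜 (S ∪ T) = vanishingSubspace 𝕜 S ⊓ vanishingSubspace 𝕜 T := by
  ext x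
  simp only [mem_vanishingSubspace, Set.mem_union, Submodule.mem_inf, or_imp, forall_and]

lemma orthogonal_vanishingSubspace [Fintype ι] [DecidableEq ι] (S : Set ι) :
    (vanishingSubspace 𝕜 S)ᗮ = vanishingSubspace 𝕜 Sᶜ := by
  ext x
  constructor
  · intro hx i hi
    have hsingle : EuclideanSpace.single i (1 : 𝕜) ∈ vanishingSubspace 𝕜 S := fun j hj => by
      simp [show j ≠ i from fun h => hi (h ▸ hj)]
    simpa [EuclideanSpace.inner_single_left] using
      (Submodule.mem_orthogonal _ _).mp hx _ hsingle
  · intro hx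
    rw [Submodule.mem_orthogonal]
    intro u hu
    refine Finset.sum_eq_zero fun i _ => ?_
    by_cases hi : i ∈ S
    · simp [hu i hi]
    · simp [hx i hi]

lemma finrank_vanishingSubspace [Fintype ι] (S : Set ι) :
    Module.finrank 𝕜 (vanishingSubspace 𝕜 S) = Nat.card ↥Sᶜ := by
  classical
  let e : vanishingSubspace 𝕜 S ≃ₗ[𝕜] (↥Sᶜ → 𝕜) :=
    { toFun := fun x i => (x : EuclideanSpace 𝕜 ι) i
      map_add' := fun _ _ => rfl
      map_smul' := fun _ _ => rfl
      invFun := fun f => ⟨WithLp.toLp 2 fun i => if h : i ∈ S then 0 else f ⟨i, h⟩,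
        fun i hi => by simp [hi]⟩
      left_inv := fun x => by
        ext i
        by_cases hi : i ∈ S
        · simp [hi, x.2 i hi]
        · simp [hi]
      right_inv := fun f => by
        ext ⟨i, hi⟩
        simp [show i ∉ S from hi] }
  rw [e.finrank_eq, Module.finrank_fintype_fun_eq_card, Nat.card_eq_fintype_card]

lemma ker_toEuclideanLin_eq_vanishingSubspace {m n : Type*} [Fintype n] [DecidableEq n]
    (M : Matrix m n 𝕜) (hM : ∀ i j j', M i j ≠ 0 → M i j' ≠ 0 → j = j') :
    LinearMap.ker (toEuclideanLin M) = vanishingSubspace 𝕜 {j | ∃ i, M i j ≠ 0} := by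
  ext x
  simp only [LinearMap.mem_ker, mem_vanishingSubspace, Set.mem_ofPred_eq]
  constructor
  · rintro hx j ⟨i, hij⟩
    have hrow : (M *ᵥ x.ofLp) i = M i j * x j := Finset.sum_eq_single j
      (fun j' _ hj' => by
        by_contra h
        exact hj' (hM i j' j (left_ne_zero_of_mul h) hij))
      (by simp)
    have : (M *ᵥ x.ofLp) i = 0 := congrArg (fun y : EuclideanSpace 𝕜 m => y i) hx
    exact (mul_eq_zero.mp (hrow ▸ this)).resolve_left hij
  · intro hx
    ext i
    refine Finset.sum_eq_zero fun j _ => ?_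
    by_cases hij : M i j = 0
    · simp [hij]
    · simp [hx j ⟨i, hij⟩]

end Vanishing

lemma Fin.natCard_setOf_le_val_and_val_lt {n a b : ℕ} (hbn : b ≤ n) :
    Nat.card {j : Fin n | a ≤ (j : ℕ) ∧ (j : ℕ) < b} = b - a := by
  have hrange : {j : Fin n | a ≤ (j : ℕ) ∧ (j : ℕ) < b} =
      Set.range fun p : Fin (b - a) => (⟨a + p, by omega⟩ : Fin n) := by
    ext j
    simp only [Set.mem_ofPred_eq, Set.mem_range, Fin.ext_iff]
    exact ⟨fun hj => ⟨⟨j - a, by omega⟩, by simp; omega⟩, by rintro ⟨p, hp⟩; omega⟩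
  rw [hrange, Nat.card_range_of_injective fun p q hpq => by simpa [Fin.ext_iff] using hpq,
    Nat.card_eq_fintype_card, Fintype.card_fin]

section GSVD

variable {k Nt : ℕ}

lemma mul_OmegaInvZero_apply {m : Type*} (A : Matrix m (Fin k) ℂ) (ω : ℕ → ℂ) (i : m)
    (j : Fin Nt) :
    (A * OmegaInvZero k Nt ω) i j = if h : (j : ℕ) < k then A i ⟨j, h⟩ * (ω j)⁻¹ else 0 := by
  rw [mul_apply]
  split_ifs with hj
  · refine (Finset.sum_eq_single ⟨j, hj⟩ (fun l _ hl => ?_) (by simp)).trans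
      (by simp [OmegaInvZero])
    simp [OmegaInvZero, show (j : ℕ) ≠ l from fun h => hl (Fin.ext h.symm)]
  · exact Finset.sum_eq_zero fun l _ => by
      simp [OmegaInvZero, show (j : ℕ) ≠ l by omega]

lemma mul_OmegaInvZero_ne_zero_iff {m : Type*} {ω : ℕ → ℂ} (hω : ∀ i < k, ω i ≠ 0)
    (A : Matrix m (Fin k) ℂ) (i : m) (j : Fin Nt) :
    (A * OmegaInvZero k Nt ω) i j ≠ 0 ↔ ∃ h : (j : ℕ) < k, A i ⟨j, h⟩ ≠ 0 := by
  rw [mul_OmegaInvZero_apply]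
  split_ifs with hj
  · simp [hj, hω j hj]
  · simp [hj]

lemma SigmaBa_ne_zero_iff {Nr r s : ℕ} {b : ℕ → ℝ} (hrsNr : r + s ≤ Nr)
    (hb : ∀ p < s, b p ≠ 0) (i : Fin Nr) (j : Fin k) :
    SigmaBa Nr k r s b i j ≠ 0 ↔ (i : ℕ) + k = j + Nr ∧ Nr - (r + s) ≤ i := by
  simp only [SigmaBa, of_apply]
  split_ifs with hij hi
  · exact iff_of_true (by simpa using hb (i - (Nr - (r + s))) (by omega)) hij
  · exact iff_of_true one_ne_zero hij
  · exact iff_of_false (not_not_intro rfl) hij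

lemma SigmaEa_ne_zero_iff {Ne r s : ℕ} {e : ℕ → ℝ} (hrsk : r + s ≤ k)
    (he : ∀ p < s, e p ≠ 0) (i : Fin Ne) (j : Fin k) :
    SigmaEa Ne k r s e i j ≠ 0 ↔ (i : ℕ) = j ∧ (i : ℕ) < k - r := by
  simp only [SigmaEa, of_apply]
  split_ifs with hij hi
  · exact iff_of_true one_ne_zero hij
  · exact iff_of_true (by simpa using he (i - (k - (r + s))) (by omega)) hij
  · exact iff_of_false (not_not_intro rfl) hij

lemma ker_SigmaBa_mul_OmegaInvZero {Nr r s : ℕ} {b : ℕ → ℝ} {ω : ℕ → ℂ} (hrsNr : r + s ≤ Nr)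
    (hb : ∀ p < s, b p ≠ 0) (hω : ∀ i < k, ω i ≠ 0) :
    LinearMap.ker (toEuclideanLin (SigmaBa Nr k r s b * OmegaInvZero k Nt ω)) =
      vanishingSubspace ℂ {j : Fin Nt | k - (r + s) ≤ (j : ℕ) ∧ (j : ℕ) < k} := by
  have hsupp (i : Fin Nr) (j : Fin Nt) : (SigmaBa Nr k r s b * OmegaInvZero k Nt ω) i j ≠ 0 ↔
      (i : ℕ) + k = j + Nr ∧ Nr - (r + s) ≤ i := by
    simp only [mul_OmegaInvZero_ne_zero_iff hω, SigmaBa_ne_zero_iff hrsNr hb]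
    exact ⟨fun ⟨_, h⟩ => h, fun h => ⟨by omega, h⟩⟩
  rw [ker_toEuclideanLin_eq_vanishingSubspace _ fun i j j' hj hj' => by
    rw [hsupp] at hj hj'; omega]
  congr 1
  ext j
  simp only [hsupp, Set.mem_ofPred_eq]
  exact ⟨fun ⟨i, hij⟩ => by omega, fun hj => ⟨⟨j + Nr - k, by omega⟩, by simp; omega⟩⟩

lemma ker_SigmaEa_mul_OmegaInvZero {Ne r s : ℕ} {e : ℕ → ℝ} {ω : ℕ → ℂ} (hrsk : r + s ≤ k)
    (hkrNe : k - r ≤ Ne) (he : ∀ p < s, e p ≠ 0) (hω : ∀ i < k, ω i ≠ 0) :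
    LinearMap.ker (toEuclideanLin (SigmaEa Ne k r s e * OmegaInvZero k Nt ω)) =
      vanishingSubspace ℂ {j : Fin Nt | (j : ℕ) < k - r} := by
  have hsupp (i : Fin Ne) (j : Fin Nt) : (SigmaEa Ne k r s e * OmegaInvZero k Nt ω) i j ≠ 0 ↔
      (i : ℕ) = j ∧ (i : ℕ) < k - r := by
    simp only [mul_OmegaInvZero_ne_zero_iff hω, SigmaEa_ne_zero_iff hrsk he]
    exact ⟨fun ⟨_, h⟩ => h, fun h => ⟨by omega, h⟩⟩
  rw [ker_toEuclideanLin_eq_vanishingSubspace _ fun i j j' hj hj' => by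
    rw [hsupp] at hj hj'; omega]
  congr 1
  ext j
  simp only [hsupp, Set.mem_ofPred_eq]
  exact ⟨fun ⟨i, hij⟩ => by omega, fun hj => ⟨⟨j, by omega⟩, rfl, hj⟩⟩

end GSVD

theorem finrank_S_ba_general (Nt Nr Ne k r s : ℕ)
    (hrsk : r + s ≤ k) (hkNt : k ≤ Nt) (hrsNr : r + s ≤ Nr) (hkrNe : k - r ≤ Ne)
    (Ua : Matrix (Fin Nt) (Fin Nt) ℂ) (Uba : Matrix (Fin Nr) (Fin Nr) ℂ)
    (Uea : Matrix (Fin Ne) (Fin Ne) ℂ)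
    (hUa : Ua ∈ Matrix.unitaryGroup (Fin Nt) ℂ)
    (hUba : Uba ∈ Matrix.unitaryGroup (Fin Nr) ℂ)
    (hUea : Uea ∈ Matrix.unitaryGroup (Fin Ne) ℂ)
    (ω : ℕ → ℂ) (hω : ∀ i < k, ω i ≠ 0)
    (b e : ℕ → ℝ)
    (hb : ∀ p < s, 0 < b p ∧ b p < 1) (he : ∀ p < s, 0 < e p ∧ e p < 1)
    (Hba : Matrix (Fin Nr) (Fin Nt) ℂ) (Hea : Matrix (Fin Ne) (Fin Nt) ℂ)
    (hHba : Hba = Uba * SigmaBa Nr k r s b * OmegaInvZero k Nt ω * Uaᴴ)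
    (hHea : Hea = Uea * SigmaEa Ne k r s e * OmegaInvZero k Nt ω * Uaᴴ) :
    Module.finrank ℂ ↥((LinearMap.ker (Matrix.toEuclideanLin Hba))ᗮ ⊓ LinearMap.ker (Matrix.toEuclideanLin Hea)) = r := by
  set Φ := (unitaryLinearIsometryEquiv hUa).toLinearEquiv
  have hker_ba : LinearMap.ker (toEuclideanLin Hba) =
      (vanishingSubspace ℂ {j : Fin Nt | k - (r + s) ≤ (j : ℕ) ∧ (j : ℕ) < k}).map
        Φ.toLinearMap := by
    rw [hHba, ker_toEuclideanLin_mul_conjTranspose hUa, Matrix.mul_assoc,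
      ker_toEuclideanLin_unitary_mul hUba,
      ker_SigmaBa_mul_OmegaInvZero hrsNr (fun p hp => (hb p hp).1.ne') hω]
  have hker_ea : LinearMap.ker (toEuclideanLin Hea) =
      (vanishingSubspace ℂ {j : Fin Nt | (j : ℕ) < k - r}).map Φ.toLinearMap := by
    rw [hHea, ker_toEuclideanLin_mul_conjTranspose hUa, Matrix.mul_assoc,
      ker_toEuclideanLin_unitary_mul hUea,
      ker_SigmaEa_mul_OmegaInvZero hrsk hkrNe (fun p hp => (he p hp).1.ne') hω]
  rw [hker_ba, hker_ea, ← Submodule.map_orthogonal_equiv, ← Submodule.map_inf _ Φ.injective,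
    LinearEquiv.finrank_map_eq, orthogonal_vanishingSubspace, ← vanishingSubspace_union,
    finrank_vanishingSubspace]
  convert Fin.natCard_setOf_le_val_and_val_lt (a := k - r) hkNt using 3
  · ext j
    simp only [Set.mem_compl_iff, Set.mem_union, Set.mem_ofPred_eq]
    omega
  · omega

/-- Under the GSVD structure, `dim_ℂ S_ba = r` where `S_ba = (ker H_ba)^⊥ ⊓ ker H_ea`. -/
theorem finrank_S_ba (Nt Nr Ne k r s : ℕ)
    (hNt : 0 < Nt) (hNr : 0 < Nr) (hNe : 0 < Ne)
    (hrsk : r + s ≤ k) (hkNt : k ≤ Nt) (hrsNr : r + s ≤ Nr) (hkrNe : k - r ≤ Ne)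
    (Ua : Matrix (Fin Nt) (Fin Nt) ℂ) (Uba : Matrix (Fin Nr) (Fin Nr) ℂ)
    (Uea : Matrix (Fin Ne) (Fin Ne) ℂ)
    (hUa : Ua ∈ Matrix.unitaryGroup (Fin Nt) ℂ)
    (hUba : Uba ∈ Matrix.unitaryGroup (Fin Nr) ℂ)
    (hUea : Uea ∈ Matrix.unitaryGroup (Fin Ne) ℂ)
    (ω : ℕ → ℂ) (hω : ∀ i < k, ω i ≠ 0)
    (b e : ℕ → ℝ)
    (hb : ∀ p < s, 0 < b p ∧ b p < 1) (he : ∀ p < s, 0 < e p ∧ e p < 1)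
    (hbe : ∀ p < s, b p ^ 2 + e p ^ 2 = 1)
    (Hba : Matrix (Fin Nr) (Fin Nt) ℂ) (Hea : Matrix (Fin Ne) (Fin Nt) ℂ)
    (hHba : Hba = Uba * SigmaBa Nr k r s b * OmegaInvZero k Nt ω * Uaᴴ)
    (hHea : Hea = Uea * SigmaEa Ne k r s e * OmegaInvZero k Nt ω * Uaᴴ) :
    Module.finrank ℂ ↥((LinearMap.ker (Matrix.toEuclideanLin Hba))ᗮ ⊓ LinearMap.ker (Matrix.toEuclideanLin Hea)) = r :=
  finrank_S_ba_general Nt Nr Ne k r s hrsk hkNt hrsNr hkrNe Ua Uba Uea hUa hUba hUea ω hω b e hb he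
    Hba Hea hHba hHea
end

section
/- Under the GSVD structure, the subspace S_ea = ker H_ba ∩ (ker H_ea)^⊥ of ℂ^{N_t} has dimension k − r − s: dim_ℂ S_ea = k − r − s. -/
open Matrix

/-!
Both channel matrices have the form `V * N * Uᴴ` with `V` and `U` unitary, so the isometry `U`
carries `ker N_ba ⊓ (ker N_ea)ᗮ` onto `S_ea` and the unitary factors can be dropped. Because `Ω`
and the nonzero blocks of `Σ_ba`, `Σ_ea` are invertible diagonal, every nonzero column of
`N = Σ [Ω⁻¹ 0]` holds the only nonzero entry of some row, so `ker N` is a coordinate subspace: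
`ker N_ba` is cut out by the coordinates in `[k-r-s, k)` and `ker N_ea` by those in `[0, k-r)`.
Orthogonal complements and intersections of coordinate subspaces are again coordinate subspaces,
and `ker N_ba ⊓ (ker N_ea)ᗮ` is the span of the first `k-r-s` basis vectors.
-/

open WithLp (toLp)

section VanishingOn

variable (𝕜 : Type*) {ι : Type*} [RCLike 𝕜]

noncomputable def vanishingOn (T : Set ι) : Submodule 𝕜 (EuclideanSpace 𝕜 ι) where
  carrier := {x | ∀ j ∈ T, x j = 0}
  add_mem' hx hy j hj := by simp [hx j hj, hy j hj]
  zero_mem' _ _ := rfl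
  smul_mem' c x hx j hj := by simp [hx j hj]

variable {𝕜}

@[simp]
theorem mem_vanishingOn {T : Set ι} {x : EuclideanSpace 𝕜 ι} :
    x ∈ vanishingOn 𝕜 T ↔ ∀ j ∈ T, x j = 0 :=
  Iff.rfl

theorem vanishingOn_inf (T₁ T₂ : Set ι) :
    vanishingOn 𝕜 T₁ ⊓ vanishingOn 𝕜 T₂ = vanishingOn 𝕜 (T₁ ∪ T₂) := by
  ext x
  simp only [Submodule.mem_inf, mem_vanishingOn, Set.mem_union]
  grind

variable [Fintype ι]

theorem orthogonal_vanishingOn [DecidableEq ι] (T : Set ι) :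
    (vanishingOn 𝕜 T)ᗮ = vanishingOn 𝕜 Tᶜ := by
  ext x
  rw [Submodule.mem_orthogonal, mem_vanishingOn]
  constructor
  · intro h j hj
    have hsingle : EuclideanSpace.single j (1 : 𝕜) ∈ vanishingOn 𝕜 T := by
      intro j' hj'
      rw [PiLp.single_apply, if_neg (by rintro rfl; exact hj hj')]
    simpa [EuclideanSpace.inner_single_left] using h _ hsingle
  · intro h y hy
    refine Finset.sum_eq_zero fun j _ => ?_
    by_cases hj : j ∈ T
    · simp [hy j hj]
    · simp [h j hj]

open Classical in
noncomputable def vanishingOnEquiv (T : Set ι) : vanishingOn 𝕜 T ≃ₗ[𝕜] (↥Tᶜ → 𝕜) where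
  toFun x j := (x : EuclideanSpace 𝕜 ι) j
  invFun g := ⟨toLp 2 fun j => if h : j ∈ T then 0 else g ⟨j, h⟩, fun j hj => by simp [hj]⟩
  map_add' _ _ := rfl
  map_smul' _ _ := rfl
  left_inv x := by
    ext j
    by_cases hj : j ∈ T
    · simp [hj, x.2 j hj]
    · simp [hj]
  right_inv g := by
    ext j
    simp [Set.notMem_of_mem_compl j.2]

theorem finrank_vanishingOn (T : Set ι) : Module.finrank 𝕜 (vanishingOn 𝕜 T) = Nat.card ↥Tᶜ := by
  classical
  rw [(vanishingOnEquiv T).finrank_eq, Module.finrank_pi, Nat.card_eq_fintype_card]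

theorem ker_toEuclideanLin_eq_vanishingOn [DecidableEq ι] {κ : Type*} (M : Matrix κ ι 𝕜)
    (T : Set ι) (hzero : ∀ i, ∀ j ∉ T, M i j = 0)
    (hpivot : ∀ j ∈ T, ∃ i, M i j ≠ 0 ∧ ∀ j' ≠ j, M i j' = 0) :
    LinearMap.ker (toEuclideanLin M) = vanishingOn 𝕜 T := by
  ext x
  simp only [LinearMap.mem_ker, mem_vanishingOn, toLpLin_apply, WithLp.toLp_eq_zero,
    funext_iff, Pi.zero_apply, mulVec, dotProduct]
  constructor
  · intro hx j hj
    obtain ⟨i, hij, hrow⟩ := hpivot j hj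
    have hxi := hx i
    rw [Finset.sum_eq_single j (fun j' _ hj' => by simp [hrow j' hj']) (by simp)] at hxi
    exact (mul_eq_zero.mp hxi).resolve_left hij
  · intro hx i
    refine Finset.sum_eq_zero fun j _ => ?_
    by_cases hj : j ∈ T
    · simp [hx j hj]
    · simp [hzero i j hj]

end VanishingOn

section UnitaryConj

variable {𝕜 : Type*} [RCLike 𝕜] {n : Type*} [Fintype n] [DecidableEq n]

noncomputable def unitaryIsometry (U : Matrix n n 𝕜) (hU : U ∈ unitaryGroup n 𝕜) :
    EuclideanSpace 𝕜 n ≃ₗᵢ[𝕜] EuclideanSpace 𝕜 n :=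
  Unitary.linearIsometryEquiv ⟨toEuclideanCLM (n := n) (𝕜 := 𝕜) U, Unitary.map_mem _ hU⟩

theorem coe_unitaryIsometry (U : Matrix n n 𝕜) (hU : U ∈ unitaryGroup n 𝕜) :
    (unitaryIsometry U hU).toLinearEquiv.toLinearMap = toEuclideanLin U :=
  rfl

theorem coe_unitaryIsometry_symm (U : Matrix n n 𝕜) (hU : U ∈ unitaryGroup n 𝕜) :
    (unitaryIsometry U hU).toLinearEquiv.symm.toLinearMap = toEuclideanLin Uᴴ := by
  rw [← coe_toEuclideanCLM_eq_toEuclideanLin, ← star_eq_conjTranspose, map_star]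
  rfl

theorem ker_unitary_mul_mul_conjTranspose {m : Type*} [Fintype m] [DecidableEq m]
    (V : Matrix m m 𝕜) (hV : V ∈ unitaryGroup m 𝕜) (U : Matrix n n 𝕜) (hU : U ∈ unitaryGroup n 𝕜)
    (N : Matrix m n 𝕜) :
    LinearMap.ker (toEuclideanLin (V * N * Uᴴ)) =
      (LinearMap.ker (toEuclideanLin N)).map (unitaryIsometry U hU).toLinearEquiv.toLinearMap := by
  rw [toLpLin_mul_same, toLpLin_mul_same, ← coe_unitaryIsometry V hV,
    ← coe_unitaryIsometry_symm U hU, LinearMap.ker_comp, LinearEquiv.ker_comp,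
    Submodule.comap_equiv_eq_map_symm, LinearEquiv.symm_symm]

theorem finrank_ker_inf_orthogonal_ker_unitary_conj {m₁ m₂ : Type*} [Fintype m₁] [DecidableEq m₁]
    [Fintype m₂] [DecidableEq m₂] (V₁ : Matrix m₁ m₁ 𝕜) (hV₁ : V₁ ∈ unitaryGroup m₁ 𝕜)
    (V₂ : Matrix m₂ m₂ 𝕜) (hV₂ : V₂ ∈ unitaryGroup m₂ 𝕜) (U : Matrix n n 𝕜)
    (hU : U ∈ unitaryGroup n 𝕜) (N₁ : Matrix m₁ n 𝕜) (N₂ : Matrix m₂ n 𝕜) :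
    Module.finrank 𝕜 ↥(LinearMap.ker (toEuclideanLin (V₁ * N₁ * Uᴴ)) ⊓
        (LinearMap.ker (toEuclideanLin (V₂ * N₂ * Uᴴ)))ᗮ) =
      Module.finrank 𝕜
        ↥(LinearMap.ker (toEuclideanLin N₁) ⊓ (LinearMap.ker (toEuclideanLin N₂))ᗮ) := by
  rw [ker_unitary_mul_mul_conjTranspose V₁ hV₁ U hU, ker_unitary_mul_mul_conjTranspose V₂ hV₂ U hU,
    ← Submodule.map_orthogonal_equiv,
    ← Submodule.map_inf _ (unitaryIsometry U hU).toLinearEquiv.injective,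
    LinearEquiv.finrank_map_eq]

end UnitaryConj

theorem mul_omegaInvZero_apply {m k Nt : ℕ} (S : Matrix (Fin m) (Fin k) ℂ) (ω : ℕ → ℂ)
    (i : Fin m) (j : Fin Nt) :
    (S * OmegaInvZero k Nt ω) i j = if h : (j : ℕ) < k then S i ⟨j, h⟩ * (ω j)⁻¹ else 0 := by
  rw [mul_apply]
  split_ifs with h
  · rw [Finset.sum_eq_single ⟨j, h⟩
      (fun l _ hl => by simp [OmegaInvZero, Fin.ext_iff] at hl ⊢; omega) (by simp)]
    simp [OmegaInvZero]
  · exact Finset.sum_eq_zero fun l _ => by simp [OmegaInvZero]; omega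

theorem ker_sigmaBa_mul_omegaInvZero {Nt Nr k r s : ℕ} (hrsNr : r + s ≤ Nr)
    {ω : ℕ → ℂ} (hω : ∀ i < k, ω i ≠ 0) {b : ℕ → ℝ} (hb : ∀ p < s, b p ≠ 0) :
    LinearMap.ker (toEuclideanLin (SigmaBa Nr k r s b * OmegaInvZero k Nt ω)) =
      vanishingOn ℂ {j : Fin Nt | k - (r + s) ≤ j ∧ (j : ℕ) < k} := by
  apply ker_toEuclideanLin_eq_vanishingOn
  · intro i j hj
    simp only [Set.mem_ofPred_eq, not_and_or, not_le, not_lt] at hj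
    simp only [mul_omegaInvZero_apply, SigmaBa, of_apply]
    split_ifs <;> first | omega | exact zero_mul _ | rfl
  · rintro j ⟨hj₁, hj₂⟩
    refine ⟨⟨j + Nr - k, by omega⟩, ?_, fun j' hj' => ?_⟩
    · simp only [mul_omegaInvZero_apply, SigmaBa, of_apply]
      split_ifs
      · simpa [hω j hj₂] using hb _ (by omega)
      · simp [hω j hj₂]
      · omega
    · simp only [mul_omegaInvZero_apply, SigmaBa, of_apply] at hj' ⊢
      split_ifs <;> first | omega | exact zero_mul _ | rfl

theorem ker_sigmaEa_mul_omegaInvZero {Nt Ne k r s : ℕ} (hkrNe : k - r ≤ Ne)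
    {ω : ℕ → ℂ} (hω : ∀ i < k, ω i ≠ 0) {e : ℕ → ℝ} (he : ∀ p < s, e p ≠ 0) :
    LinearMap.ker (toEuclideanLin (SigmaEa Ne k r s e * OmegaInvZero k Nt ω)) =
      vanishingOn ℂ {j : Fin Nt | (j : ℕ) < k - r} := by
  apply ker_toEuclideanLin_eq_vanishingOn
  · intro i j hj
    simp only [Set.mem_ofPred_eq, not_lt] at hj
    simp only [mul_omegaInvZero_apply, SigmaEa, of_apply]
    split_ifs <;> first | omega | exact zero_mul _ | rfl
  · intro j hj
    simp only [Set.mem_ofPred_eq] at hj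
    refine ⟨⟨j, by omega⟩, ?_, fun j' hj' => ?_⟩
    · simp only [mul_omegaInvZero_apply, SigmaEa, of_apply, true_and]
      have hωj : ω j ≠ 0 := hω j (by omega)
      split_ifs
      · simp [hωj]
      · simpa [hωj] using he _ (by omega)
      · omega
    · simp only [mul_omegaInvZero_apply, SigmaEa, of_apply] at hj' ⊢
      split_ifs <;> first | omega | exact zero_mul _ | rfl

theorem Fin.natCard_setOf_val_lt {n m : ℕ} (hmn : m ≤ n) :
    Nat.card {j : Fin n | (j : ℕ) < m} = m := by
  simp only [Nat.card_eq_fintype_card, Fintype.card_subtype, Set.mem_ofPred_eq,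
    Fin.card_filter_val_lt]
  exact min_eq_right hmn

theorem finrank_S_ea_general (Nt Nr Ne k r s : ℕ)
    (hkNt : k ≤ Nt) (hrsNr : r + s ≤ Nr) (hkrNe : k - r ≤ Ne)
    (Ua : Matrix (Fin Nt) (Fin Nt) ℂ) (Uba : Matrix (Fin Nr) (Fin Nr) ℂ)
    (Uea : Matrix (Fin Ne) (Fin Ne) ℂ)
    (hUa : Ua ∈ Matrix.unitaryGroup (Fin Nt) ℂ)
    (hUba : Uba ∈ Matrix.unitaryGroup (Fin Nr) ℂ)
    (hUea : Uea ∈ Matrix.unitaryGroup (Fin Ne) ℂ)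
    (ω : ℕ → ℂ) (hω : ∀ i < k, ω i ≠ 0)
    (b e : ℕ → ℝ)
    (hb : ∀ p < s, 0 < b p ∧ b p < 1) (he : ∀ p < s, 0 < e p ∧ e p < 1)
    (Hba : Matrix (Fin Nr) (Fin Nt) ℂ) (Hea : Matrix (Fin Ne) (Fin Nt) ℂ)
    (hHba : Hba = Uba * SigmaBa Nr k r s b * OmegaInvZero k Nt ω * Uaᴴ)
    (hHea : Hea = Uea * SigmaEa Ne k r s e * OmegaInvZero k Nt ω * Uaᴴ) :
    Module.finrank ℂ ↥(LinearMap.ker (Matrix.toEuclideanLin Hba) ⊓ (LinearMap.ker (Matrix.toEuclideanLin Hea))ᗮ) = k - r - s := by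
  have hcompl : ({j : Fin Nt | k - (r + s) ≤ j ∧ (j : ℕ) < k} ∪ {j : Fin Nt | (j : ℕ) < k - r}ᶜ)ᶜ =
      {j : Fin Nt | (j : ℕ) < k - r - s} := by
    ext j
    simp only [Set.mem_compl_iff, Set.mem_union, Set.mem_ofPred_eq]
    omega
  rw [hHba, hHea, Matrix.mul_assoc Uba, Matrix.mul_assoc Uea,
    finrank_ker_inf_orthogonal_ker_unitary_conj Uba hUba Uea hUea Ua hUa,
    ker_sigmaBa_mul_omegaInvZero hrsNr hω fun p hp => (hb p hp).1.ne',
    ker_sigmaEa_mul_omegaInvZero hkrNe hω fun p hp => (he p hp).1.ne',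
    orthogonal_vanishingOn, vanishingOn_inf, finrank_vanishingOn, hcompl,
    Fin.natCard_setOf_val_lt (by omega)]

/-- Under the GSVD structure, `dim_ℂ S_ea = k − r − s` where `S_ea = ker H_ba ⊓ (ker H_ea)^⊥`. -/
theorem finrank_S_ea (Nt Nr Ne k r s : ℕ)
    (hNt : 0 < Nt) (hNr : 0 < Nr) (hNe : 0 < Ne)
    (hrsk : r + s ≤ k) (hkNt : k ≤ Nt) (hrsNr : r + s ≤ Nr) (hkrNe : k - r ≤ Ne)
    (Ua : Matrix (Fin Nt) (Fin Nt) ℂ) (Uba : Matrix (Fin Nr) (Fin Nr) ℂ)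
    (Uea : Matrix (Fin Ne) (Fin Ne) ℂ)
    (hUa : Ua ∈ Matrix.unitaryGroup (Fin Nt) ℂ)
    (hUba : Uba ∈ Matrix.unitaryGroup (Fin Nr) ℂ)
    (hUea : Uea ∈ Matrix.unitaryGroup (Fin Ne) ℂ)
    (ω : ℕ → ℂ) (hω : ∀ i < k, ω i ≠ 0)
    (b e : ℕ → ℝ)
    (hb : ∀ p < s, 0 < b p ∧ b p < 1) (he : ∀ p < s, 0 < e p ∧ e p < 1)
    (hbe : ∀ p < s, b p ^ 2 + e p ^ 2 = 1)
    (Hba : Matrix (Fin Nr) (Fin Nt) ℂ) (Hea : Matrix (Fin Ne) (Fin Nt) ℂ)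
    (hHba : Hba = Uba * SigmaBa Nr k r s b * OmegaInvZero k Nt ω * Uaᴴ)
    (hHea : Hea = Uea * SigmaEa Ne k r s e * OmegaInvZero k Nt ω * Uaᴴ) :
    Module.finrank ℂ ↥(LinearMap.ker (Matrix.toEuclideanLin Hba) ⊓ (LinearMap.ker (Matrix.toEuclideanLin Hea))ᗮ) = k - r - s :=
  finrank_S_ea_general Nt Nr Ne k r s hkNt hrsNr hkrNe Ua Uba Uea hUa hUba hUea ω hω b e hb he Hba
    Hea hHba hHea
end
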